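/- arXiv:2307.00582 — 5 statements merged into one kernel-verified Lean document; each statement's English description precedes it below -/
import Mathlib

section
/- Let M, C, K be real symmetric n×n matrices with M positive definite, and suppose the quadratic pencil P(λ) = λ²M + λC + K has 2n eigenpairs (λᵢ, xᵢ) collected in Λ = diag(λ₁,…,λ_{2n}) and X = [x₁,…,x_{2n}]. Then Λ Xᵀ M X Λ − Xᵀ K X is a diagonal matrix. -/
/-!
Write `G_A = Xᵀ A X`, so that `(G_A)_{pq} = x_pᵀ A x_q` is symmetric for symmetric `A`. Pairing the
eigen-equation of `x_q` with `x_p` gives `λ_q² M_{pq} + λ_q C_{pq} + K_{pq} = 0`, and by symmetry the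
same with `λ_p` in place of `λ_q`. For `p ≠ q` the difference of the two, divided by `λ_q - λ_p ≠ 0`,
is `(λ_p + λ_q) M_{pq} + C_{pq} = 0`; multiplying it by `λ_q` and subtracting the first equation
leaves `λ_p λ_q M_{pq} - K_{pq} = 0`, the off-diagonal entry of `Λ G_M Λ - G_K`.
-/

open Matrix

/-- Complexification of a real matrix. -/
def mc {n m : ℕ} (A : Matrix (Fin n) (Fin m) ℝ) : Matrix (Fin n) (Fin m) ℂ :=
  A.map Complex.ofReal

namespace Matrix

variable {R m ι : Type*} [Fintype m]

section CommSemiring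

variable [CommSemiring R]

theorem transpose_mul_mul_apply (X : Matrix m ι R) (A : Matrix m m R) (p q : ι) :
    (Xᵀ * A * X) p q = Xᵀ p ⬝ᵥ A *ᵥ Xᵀ q := by
  rw [dotProduct_mulVec]
  rfl

theorem IsSymm.transpose_mul_mul (X : Matrix m ι R) {A : Matrix m m R} (hA : A.IsSymm) :
    (Xᵀ * A * X).IsSymm := by
  rw [IsSymm, transpose_mul, transpose_mul, hA.eq, transpose_transpose, Matrix.mul_assoc]

theorem transpose_mul_mul_pencil_apply_eq_zero {M C K : Matrix m m R} {X : Matrix m ι R} {l : R}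
    {q : ι} (heig : (l ^ 2 • M + l • C + K) *ᵥ Xᵀ q = 0) (p : ι) :
    l ^ 2 * (Xᵀ * M * X) p q + l * (Xᵀ * C * X) p q + (Xᵀ * K * X) p q = 0 := by
  simpa only [transpose_mul_mul_apply, add_mulVec, smul_mulVec, dotProduct_add,
    dotProduct_smul, smul_eq_mul, dotProduct_zero] using congrArg (Xᵀ p ⬝ᵥ ·) heig

end CommSemiring

variable [CommRing R] [IsDomain R] {M C K : Matrix m m R} {X : Matrix m ι R} {lam : ι → R}

theorem add_mul_transpose_mul_mul_add_eq_zero_of_pencil (hM : M.IsSymm) (hC : C.IsSymm)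
    (hK : K.IsSymm) (heig : ∀ i, (lam i ^ 2 • M + lam i • C + K) *ᵥ Xᵀ i = 0) {p q : ι}
    (hpq : lam p ≠ lam q) :
    (lam p + lam q) * (Xᵀ * M * X) p q + (Xᵀ * C * X) p q = 0 := by
  have hq := transpose_mul_mul_pencil_apply_eq_zero (heig q) p
  have hp := transpose_mul_mul_pencil_apply_eq_zero (heig p) q
  rw [(hM.transpose_mul_mul X).apply, (hC.transpose_mul_mul X).apply,
    (hK.transpose_mul_mul X).apply] at hp
  refine (mul_eq_zero.mp ?_).resolve_left (sub_ne_zero.mpr hpq.symm)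
  linear_combination hq - hp

theorem isDiag_diagonal_mul_transpose_mul_mul_mul_diagonal_sub [Fintype ι] [DecidableEq ι]
    (hM : M.IsSymm) (hC : C.IsSymm) (hK : K.IsSymm) (hlam : Function.Injective lam)
    (heig : ∀ i, (lam i ^ 2 • M + lam i • C + K) *ᵥ Xᵀ i = 0) :
    (diagonal lam * Xᵀ * M * X * diagonal lam - Xᵀ * K * X).IsDiag := by
  intro p q hpq
  have hMC := add_mul_transpose_mul_mul_add_eq_zero_of_pencil hM hC hK heig (hlam.ne hpq)
  have hq := transpose_mul_mul_pencil_apply_eq_zero (heig q) p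
  rw [sub_apply, mul_diagonal, Matrix.mul_assoc, Matrix.mul_assoc, ← Matrix.mul_assoc Xᵀ,
    diagonal_mul]
  linear_combination lam q * hMC - hq

end Matrix

theorem stmt_0_general (n : ℕ) (M C K : Matrix (Fin n) (Fin n) ℝ)
    (hM : M.IsSymm) (hC : C.IsSymm) (hK : K.IsSymm)
    (lam : Fin (2 * n) → ℂ) (hdist : Function.Injective lam)
    (X : Matrix (Fin n) (Fin (2 * n)) ℂ)
    (heig : ∀ i, ((lam i) ^ 2 • mc M + lam i • mc C + mc K) *ᵥ (fun r => X r i) = 0) :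
    (Matrix.diagonal lam * Xᵀ * mc M * X * Matrix.diagonal lam - Xᵀ * mc K * X).IsDiag :=
  isDiag_diagonal_mul_transpose_mul_mul_mul_diagonal_sub (hM.map _) (hC.map _) (hK.map _) hdist
    heig

theorem stmt_0 (n : ℕ) (M C K : Matrix (Fin n) (Fin n) ℝ)
    (hM : M.IsSymm) (hC : C.IsSymm) (hK : K.IsSymm) (hMpd : M.PosDef)
    (lam : Fin (2 * n) → ℂ) (hdist : Function.Injective lam)
    (X : Matrix (Fin n) (Fin (2 * n)) ℂ)
    (heig : ∀ i, ((lam i) ^ 2 • mc M + lam i • mc C + mc K) *ᵥ (fun r => X r i) = 0) :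
    (Matrix.diagonal lam * Xᵀ * mc M * X * Matrix.diagonal lam - Xᵀ * mc K * X).IsDiag :=
  stmt_0_general n M C K hM hC hK lam hdist X heig
end

section
/- Let M, C, K be real symmetric n×n matrices with M positive definite, and suppose the quadratic pencil P(λ) = λ²M + λC + K has 2n eigenpairs (λᵢ, xᵢ) with Λ = diag(λ₁,…,λ_{2n}), X = [x₁,…,x_{2n}]. Then Λ Xᵀ M X + Xᵀ M X Λ + Xᵀ C X is a diagonal matrix. -/
/-!
For eigenpairs `(λᵢ, xᵢ)`, `(λⱼ, xⱼ)` of a pencil with symmetric coefficients, pairing the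
`j`-th eigen-equation with `xᵢ` and the `i`-th one with `xⱼ` gives the same `K`-term, so the
difference is `(λⱼ - λᵢ) * ((λᵢ + λⱼ) xᵢᵀ M xⱼ + xᵢᵀ C xⱼ) = 0`. For `λᵢ ≠ λⱼ` the second
factor, which is the `(i, j)` entry of `Λ Xᵀ M X + Xᵀ M X Λ + Xᵀ C X`, vanishes.
-/

open Matrix

namespace Matrix

variable {ι κ l o α : Type*}

theorem mul_mul_apply_rectangular [Fintype κ] [Fintype l] [CommSemiring α]
    (A : Matrix ι κ α) (B : Matrix κ l α) (D : Matrix l o α) (i : ι) (j : o) :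
    (A * B * D) i j = A i ⬝ᵥ B *ᵥ Dᵀ j := by
  rw [Matrix.mul_assoc]
  simp [mul_apply, dotProduct, mulVec]

theorem IsSymm.dotProduct_mulVec_comm [Fintype ι] [CommSemiring α] {A : Matrix ι ι α}
    (hA : A.IsSymm) (x y : ι → α) : x ⬝ᵥ A *ᵥ y = y ⬝ᵥ A *ᵥ x := by
  rw [← dotProduct_transpose_mulVec, hA]

theorem IsSymm.pencil_eigenvectors_orthogonal [Fintype ι] [CommRing α] [IsDomain α]
    {M C K : Matrix ι ι α} (hM : M.IsSymm) (hC : C.IsSymm) (hK : K.IsSymm) {μ ν : α}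
    {x y : ι → α} (hμν : μ ≠ ν) (hx : (μ ^ 2 • M + μ • C + K) *ᵥ x = 0)
    (hy : (ν ^ 2 • M + ν • C + K) *ᵥ y = 0) :
    (μ + ν) * (x ⬝ᵥ M *ᵥ y) + x ⬝ᵥ C *ᵥ y = 0 := by
  have pairing : ∀ (t : α) (u v : ι → α), (t ^ 2 • M + t • C + K) *ᵥ v = 0 →
      t ^ 2 * (u ⬝ᵥ M *ᵥ v) + t * (u ⬝ᵥ C *ᵥ v) + u ⬝ᵥ K *ᵥ v = 0 := by
    intro t u v hv
    simpa [add_mulVec, smul_mulVec, dotProduct_add, dotProduct_smul] using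
      congrArg (u ⬝ᵥ ·) hv
  have hyx := pairing μ y x hx
  rw [hM.dotProduct_mulVec_comm, hC.dotProduct_mulVec_comm, hK.dotProduct_mulVec_comm] at hyx
  have hprod : (ν - μ) * ((μ + ν) * (x ⬝ᵥ M *ᵥ y) + x ⬝ᵥ C *ᵥ y) = 0 := by
    linear_combination pairing ν x y hy - hyx
  exact (mul_eq_zero.mp hprod).resolve_left (sub_ne_zero.mpr hμν.symm)

end Matrix

theorem stmt_2_general (n : ℕ) (M C K : Matrix (Fin n) (Fin n) ℝ)
    (hM : M.IsSymm) (hC : C.IsSymm) (hK : K.IsSymm)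
    (lam : Fin (2 * n) → ℂ) (hdist : Function.Injective lam)
    (X : Matrix (Fin n) (Fin (2 * n)) ℂ)
    (heig : ∀ i, ((lam i) ^ 2 • mc M + lam i • mc C + mc K) *ᵥ (fun r => X r i) = 0) :
    (Matrix.diagonal lam * (Xᵀ * mc M * X) + Xᵀ * mc M * X * Matrix.diagonal lam + Xᵀ * mc C * X).IsDiag := by
  intro i j hij
  have mc_symm : ∀ {A : Matrix (Fin n) (Fin n) ℝ}, A.IsSymm → (mc A).IsSymm :=
    fun hA => hA.map Complex.ofReal
  have horth : (lam i + lam j) * (Xᵀ i ⬝ᵥ mc M *ᵥ Xᵀ j) + Xᵀ i ⬝ᵥ mc C *ᵥ Xᵀ j = 0 :=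
    (mc_symm hM).pencil_eigenvectors_orthogonal (mc_symm hC) (mc_symm hK) (hdist.ne hij)
      (heig i) (heig j)
  simp only [Matrix.add_apply, diagonal_mul, mul_diagonal, mul_mul_apply_rectangular]
  linear_combination horth

theorem stmt_2 (n : ℕ) (M C K : Matrix (Fin n) (Fin n) ℝ)
    (hM : M.IsSymm) (hC : C.IsSymm) (hK : K.IsSymm) (hMpd : M.PosDef)
    (lam : Fin (2 * n) → ℂ) (hdist : Function.Injective lam)
    (X : Matrix (Fin n) (Fin (2 * n)) ℂ)
    (heig : ∀ i, ((lam i) ^ 2 • mc M + lam i • mc C + mc K) *ᵥ (fun r => X r i) = 0) :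
    (Matrix.diagonal lam * (Xᵀ * mc M * X) + Xᵀ * mc M * X * Matrix.diagonal lam + Xᵀ * mc C * X).IsDiag :=
  stmt_2_general n M C K hM hC hK lam hdist X heig
end

section
/- Let λ₁,…,λ_p and μ₁,…,μ_p be 2p pairwise distinct complex numbers. Then the p×p Cauchy matrix Ĥ with entries Ĥ_{ij} = 1/(μⱼ − λᵢ) is invertible, and its inverse T has entries t_{ij} = [∏_{k=1}^p (λⱼ − μ_k) · ∏_{k=1}^p (μᵢ − λ_k)] / [(λⱼ − μᵢ) · ∏_{k≠i} (μᵢ − μ_k) · ∏_{k≠j} (λⱼ − λ_k)]. -/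
/-!
Fix `j` and let `q = ∏_{k ≠ j} (X - λ_k)`, of degree `< p`. The first barycentric form of the
Lagrange interpolant of `q` at the nodes `μ`, evaluated at `λ_i`, gives
`(Ĥ T)_{ij} = (∏_k (λ_j - μ_k) / q(λ_j)) * q(λ_i) / ∏_k (λ_i - μ_k)`,
which is `1` for `i = j` and `0` otherwise, since then `q(λ_i) = 0`.
-/

open Matrix Polynomial Lagrange Finset

namespace Lagrange

variable {F ι : Type*} [Field F] [DecidableEq ι] {s : Finset ι} {v : ι → F} {x : F}

theorem eval_eq_eval_nodal_mul_sum_of_degree_lt {f : F[X]} (hvs : Set.InjOn v s)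
    (hf : f.degree < #s) (hx : ∀ i ∈ s, x ≠ v i) :
    eval x f = eval x (nodal s v) * ∑ i ∈ s, nodalWeight s v i * (x - v i)⁻¹ * eval (v i) f := by
  conv_lhs => rw [eq_interpolate hvs hf]
  exact eval_interpolate_not_at_node _ hx

end Lagrange

section Cauchy

variable {F ι : Type*} [Field F] [Fintype ι] [DecidableEq ι]

def cauchyMatrix (lam mu : ι → F) : Matrix ι ι F :=
  of fun i j => 1 / (mu j - lam i)

def cauchyMatrixInv (lam mu : ι → F) : Matrix ι ι F :=
  of fun i j =>
    ((∏ k, (lam j - mu k)) * ∏ k, (mu i - lam k)) /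
      ((lam j - mu i) * (∏ k ∈ univ.erase i, (mu i - mu k)) * ∏ k ∈ univ.erase j, (lam j - lam k))

theorem cauchyMatrix_mul_cauchyMatrixInv_apply_apply (lam mu : ι → F) {i j : ι} (l : ι)
    (hjl : lam j ≠ mu l) :
    cauchyMatrix lam mu i l * cauchyMatrixInv lam mu l j =
      (∏ k, (lam j - mu k)) / (∏ k ∈ univ.erase j, (lam j - lam k)) *
        (nodalWeight univ mu l * (lam i - mu l)⁻¹ * eval (mu l) (nodal (univ.erase j) lam)) := by
  have hsplit : ∏ k, (mu l - lam k) = (mu l - lam j) * ∏ k ∈ univ.erase j, (mu l - lam k) :=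
    (mul_prod_erase _ _ (mem_univ j)).symm
  have hjl' : lam j - mu l ≠ 0 := sub_ne_zero.mpr hjl
  simp only [cauchyMatrix, cauchyMatrixInv, of_apply, nodalWeight, eval_nodal, hsplit,
    prod_inv_distrib, ← neg_sub (lam i) (mu l), ← neg_sub (lam j) (mu l)]
  field_simp

theorem cauchyMatrix_mul_cauchyMatrixInv {lam mu : ι → F} (hlam : Function.Injective lam)
    (hmu : Function.Injective mu) (hlm : ∀ a b, lam a ≠ mu b) :
    cauchyMatrix lam mu * cauchyMatrixInv lam mu = 1 := by
  ext i j
  have hq : (nodal (univ.erase j) lam).degree < #(univ : Finset ι) := by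
    rw [degree_nodal]
    exact_mod_cast card_erase_lt_of_mem (mem_univ j)
  have hbary := eval_eq_eval_nodal_mul_sum_of_degree_lt hmu.injOn hq (fun l _ => hlm i l)
  rw [mul_apply, sum_congr rfl fun l _ => cauchyMatrix_mul_cauchyMatrixInv_apply_apply
    lam mu l (hlm j l), ← mul_sum, one_apply]
  split_ifs with hij
  · subst hij
    have hL : ∏ k ∈ univ.erase i, (lam i - lam k) ≠ 0 :=
      prod_ne_zero_iff.mpr fun k hk => sub_ne_zero.mpr (hlam.ne (ne_of_mem_erase hk).symm)
    rw [eval_nodal, eval_nodal] at hbary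
    rw [div_mul_eq_mul_div, ← hbary, div_self hL]
  · have hC : eval (lam i) (nodal univ mu) ≠ 0 := eval_nodal_not_at_node fun l _ => hlm i l
    have hqi : eval (lam i) (nodal (univ.erase j) lam) = 0 :=
      eval_nodal_at_node (mem_erase.mpr ⟨hij, mem_univ i⟩)
    rw [hbary] at hqi
    rw [(mul_eq_zero.mp hqi).resolve_left hC, mul_zero]

end Cauchy

theorem stmt_4 (p : ℕ) (lam mu : Fin p → ℂ)
    (hdist : Function.Injective (Sum.elim lam mu : Fin p ⊕ Fin p → ℂ)) :
    IsUnit (Matrix.of (fun i j => 1 / (mu j - lam i)) : Matrix (Fin p) (Fin p) ℂ).det ∧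
    (Matrix.of (fun i j => 1 / (mu j - lam i)) : Matrix (Fin p) (Fin p) ℂ)⁻¹ =
      Matrix.of (fun i j : Fin p =>
        ((∏ k, (lam j - mu k)) * ∏ k, (mu i - lam k)) /
          ((lam j - mu i) * (∏ k ∈ Finset.univ.erase i, (mu i - mu k)) *
            ∏ k ∈ Finset.univ.erase j, (lam j - lam k))) := by
  obtain ⟨hlam, hmu, hlm⟩ := Sum.elim_injective.mp hdist
  have hinv := cauchyMatrix_mul_cauchyMatrixInv hlam hmu hlm
  exact ⟨isUnit_det_of_right_inverse hinv, inv_eq_right_inv hinv⟩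
end

section
/- Let M, C, K ∈ ℝ^{n×n} with M positive definite, b ∈ ℝⁿ, and let λ₁,…,λ_p be eigenvalues of the pencil λ²M + λC + K with eigenvectors x₁,…,x_p, let μ₁,…,μ_p be complex numbers with all λᵢ, μⱼ pairwise distinct, and suppose y₁,…,y_p solve (μⱼ²M + μⱼC + K)yⱼ = b. Then the matrix H = Λ₁ X₁ᵀ M Y₁ + X₁ᵀ M Y₁ Σ₁ + X₁ᵀ C Y₁ factors as H = diag(bᵀx₁,…,bᵀx_p) · Ĥ, where Ĥ_{ij} = 1/(μⱼ − λᵢ). -/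
open Matrix

/-- Complexification of a real vector. -/
def vc {n : ℕ} (v : Fin n → ℝ) : Fin n → ℂ := fun i => (v i : ℂ)

/-!
Write `Q(s) = s²M + sC + K`. Since `Q(λᵢ)` is symmetric and kills `xᵢ`, the bilinear form
`xᵢᵀ Q(λᵢ) yⱼ` vanishes, so
`bᵀxᵢ = xᵢᵀ Q(μⱼ) yⱼ = xᵢᵀ (Q(μⱼ) - Q(λᵢ)) yⱼ = (μⱼ - λᵢ) · xᵢᵀ((λᵢ + μⱼ) M + C) yⱼ`,
and the last bilinear form is exactly `Hᵢⱼ`.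
-/

namespace Matrix

variable {n R : Type*} [CommRing R]

def quadPencil (M C K : Matrix n n R) (s : R) : Matrix n n R :=
  s ^ 2 • M + s • C + K

theorem IsSymm.quadPencil {M C K : Matrix n n R} (hM : M.IsSymm) (hC : C.IsSymm)
    (hK : K.IsSymm) (s : R) : (quadPencil M C K s).IsSymm :=
  ((hM.smul _).add (hC.smul _)).add hK

theorem quadPencil_sub_quadPencil (M C K : Matrix n n R) (s t : R) :
    quadPencil M C K t - quadPencil M C K s = (t - s) • ((s + t) • M + C) := by
  simp only [quadPencil, smul_add, smul_smul]
  module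

theorem IsSymm.dotProduct_mulVec_eq_zero_of_mulVec_eq_zero [Fintype n] {A : Matrix n n R}
    (hA : A.IsSymm) {x : n → R} (hx : A *ᵥ x = 0) (y : n → R) : x ⬝ᵥ (A *ᵥ y) = 0 := by
  rw [dotProduct_mulVec, ← mulVec_transpose, hA.eq, hx, zero_dotProduct]

theorem dotProduct_quadPencil_mulVec_of_mulVec_eq_zero [Fintype n] {M C K : Matrix n n R}
    (hM : M.IsSymm) (hC : C.IsSymm) (hK : K.IsSymm) {s : R} {x : n → R}
    (hx : quadPencil M C K s *ᵥ x = 0) (t : R) (y : n → R) :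
    x ⬝ᵥ (quadPencil M C K t *ᵥ y) =
      (t - s) * ((s + t) * (x ⬝ᵥ (M *ᵥ y)) + x ⬝ᵥ (C *ᵥ y)) := by
  have hvanish := (IsSymm.quadPencil hM hC hK s).dotProduct_mulVec_eq_zero_of_mulVec_eq_zero hx y
  calc x ⬝ᵥ (quadPencil M C K t *ᵥ y)
      = x ⬝ᵥ ((quadPencil M C K t - quadPencil M C K s) *ᵥ y) := by
        rw [sub_mulVec, dotProduct_sub, hvanish, sub_zero]
    _ = _ := by
        rw [quadPencil_sub_quadPencil, smul_mulVec, add_mulVec, smul_mulVec, dotProduct_smul,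
          dotProduct_add, dotProduct_smul, smul_eq_mul, smul_eq_mul]

theorem transpose_of_mul_mul_of_apply [Fintype n] {m : Type*} (A : Matrix n n R)
    (x y : m → n → R) (i j : m) :
    ((of fun r i => x i r)ᵀ * A * of fun r j => y j r) i j = x i ⬝ᵥ (A *ᵥ y j) := by
  rw [mul_apply', dotProduct_mulVec]
  rfl

end Matrix

theorem stmt_6_general (n p : ℕ) (M C K : Matrix (Fin n) (Fin n) ℝ)
    (hM : M.IsSymm) (hC : C.IsSymm) (hK : K.IsSymm)
    (b : Fin n → ℝ)
    (lam mu : Fin p → ℂ)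
    (hdist : Function.Injective (Sum.elim lam mu : Fin p ⊕ Fin p → ℂ))
    (x y : Fin p → Fin n → ℂ)
    (heigx : ∀ i, ((lam i) ^ 2 • mc M + lam i • mc C + mc K) *ᵥ x i = 0)
    (heigy : ∀ j, ((mu j) ^ 2 • mc M + mu j • mc C + mc K) *ᵥ y j = vc b)
    (X1 Y1 : Matrix (Fin n) (Fin p) ℂ)
    (hX1 : X1 = Matrix.of fun r i => x i r)
    (hY1 : Y1 = Matrix.of fun r j => y j r)
    (H : Matrix (Fin p) (Fin p) ℂ)
    (hH : H = Matrix.diagonal lam * X1ᵀ * mc M * Y1 + X1ᵀ * mc M * Y1 * Matrix.diagonal mu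
      + X1ᵀ * mc C * Y1) :
    H = Matrix.diagonal (fun i => vc b ⬝ᵥ x i) *
      Matrix.of (fun i j : Fin p => 1 / (mu j - lam i)) := by
  subst hH hX1 hY1
  ext i j
  have hne : mu j - lam i ≠ 0 :=
    sub_ne_zero.mpr fun h => Sum.inr_ne_inl (hdist (a₁ := .inr j) (a₂ := .inl i) h)
  have hsymm {A : Matrix (Fin n) (Fin n) ℝ} (hA : A.IsSymm) : (mc A).IsSymm := hA.map _
  have hbx : vc b ⬝ᵥ x i
      = (mu j - lam i) * ((lam i + mu j) * (x i ⬝ᵥ (mc M *ᵥ y j)) + x i ⬝ᵥ (mc C *ᵥ y j)) := by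
    rw [dotProduct_comm, ← heigy j]
    exact dotProduct_quadPencil_mulVec_of_mulVec_eq_zero (hsymm hM) (hsymm hC) (hsymm hK)
      (heigx i) (mu j) (y j)
  rw [diagonal_mul, of_apply, hbx, mul_one_div, eq_div_iff hne]
  rw [Matrix.add_apply, Matrix.add_apply, Matrix.mul_assoc, Matrix.mul_assoc,
    ← Matrix.mul_assoc _ (mc M), diagonal_mul, mul_diagonal, transpose_of_mul_mul_of_apply,
    transpose_of_mul_mul_of_apply]
  ring

theorem stmt_6 (n p : ℕ) (M C K : Matrix (Fin n) (Fin n) ℝ)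
    (hM : M.IsSymm) (hC : C.IsSymm) (hK : K.IsSymm) (hMpd : M.PosDef)
    (b : Fin n → ℝ)
    (lam mu : Fin p → ℂ)
    (hdist : Function.Injective (Sum.elim lam mu : Fin p ⊕ Fin p → ℂ))
    (x y : Fin p → Fin n → ℂ)
    (heigx : ∀ i, ((lam i) ^ 2 • mc M + lam i • mc C + mc K) *ᵥ x i = 0)
    (heigy : ∀ j, ((mu j) ^ 2 • mc M + mu j • mc C + mc K) *ᵥ y j = vc b)
    (X1 Y1 : Matrix (Fin n) (Fin p) ℂ)
    (hX1 : X1 = Matrix.of fun r i => x i r)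
    (hY1 : Y1 = Matrix.of fun r j => y j r)
    (H : Matrix (Fin p) (Fin p) ℂ)
    (hH : H = Matrix.diagonal lam * X1ᵀ * mc M * Y1 + X1ᵀ * mc M * Y1 * Matrix.diagonal mu
      + X1ᵀ * mc C * Y1) :
    H = Matrix.diagonal (fun i => vc b ⬝ᵥ x i) *
      Matrix.of (fun i j : Fin p => 1 / (mu j - lam i)) :=
  stmt_6_general n p M C K hM hC hK b lam mu hdist x y heigx heigy X1 Y1 hX1 hY1 H hH
end

section
/- Let λ₁,…,λ_p, μ₁,…,μ_p be pairwise distinct complex numbers. In the case τ = 0, the explicit solution βⱼ = (1/(bᵀxⱼ)) · [∏_{k=1}^p (λⱼ − μ_k)/∏_{k≠j}(λⱼ − λ_k)] · Σᵢ [∏_k (μᵢ − λ_k)]/[(λⱼ − μᵢ)∏_{k≠i}(μᵢ − μ_k)] simplifies to βⱼ = (1/(bᵀxⱼ)) (μⱼ − λⱼ) ∏_{k≠j} (λⱼ − μ_k)/(λⱼ − λ_k). -/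
/-!
The polynomial `f = ∏ₖ (X - λₖ) - ∏ₖ (X - μₖ)` has degree `< p`, so Lagrange interpolation at
the nodes `μᵢ` gives the partial fraction expansion
`f(x) / ∏ₖ (x - μₖ) = ∑ᵢ f(μᵢ) / ((x - μᵢ) ∏_{k ≠ i} (μᵢ - μₖ))`.
Since `f(μᵢ) = ∏ₖ (μᵢ - λₖ)` and `f(λⱼ) = -∏ₖ (λⱼ - μₖ)`, the sum in the explicit formula
equals `-1` at `x = λⱼ`, and the factor `λⱼ - μⱼ` splits off the remaining product.
-/

open Finset Polynomial

namespace Lagrange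

variable {F ι : Type*} [Field F] [DecidableEq ι] {s : Finset ι} {v : ι → F}

theorem sum_eval_div_eq_eval_div_prod (hvs : Set.InjOn v s) {f : F[X]} (hf : f.degree < #s)
    {x : F} (hx : ∀ i ∈ s, x ≠ v i) :
    ∑ i ∈ s, f.eval (v i) / ((x - v i) * ∏ k ∈ s.erase i, (v i - v k)) =
      f.eval x / ∏ i ∈ s, (x - v i) := by
  have hnodal : eval x (nodal s v) ≠ 0 := eval_nodal_not_at_node hx
  rw [eq_interpolate hvs hf, eval_interpolate_not_at_node _ hx, ← eval_nodal,
    mul_div_cancel_left₀ _ hnodal]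
  refine sum_congr rfl fun i _ => ?_
  rw [nodalWeight, prod_inv_distrib, ← eq_interpolate hvs hf]
  field_simp

theorem sum_prod_sub_div_eq_prod_div_prod_sub_one (hvs : Set.InjOn v s) (w : ι → F) {x : F}
    (hx : ∀ i ∈ s, x ≠ v i) :
    ∑ i ∈ s, (∏ k ∈ s, (v i - w k)) / ((x - v i) * ∏ k ∈ s.erase i, (v i - v k)) =
      (∏ k ∈ s, (x - w k)) / ∏ k ∈ s, (x - v k) - 1 := by
  have hdeg : (nodal s w - nodal s v).degree < #s := by
    have h := degree_sub_lt_left (p := nodal s w) (q := nodal s v)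
      (by rw [degree_nodal, degree_nodal]) nodal_ne_zero
      (by rw [nodal_monic.leadingCoeff, nodal_monic.leadingCoeff])
    rwa [degree_nodal] at h
  have hprod : ∏ k ∈ s, (x - v k) ≠ 0 := by
    rw [← eval_nodal]
    exact eval_nodal_not_at_node hx
  rw [← div_self hprod, ← sub_div]
  convert sum_eval_div_eq_eval_div_prod hvs hdeg hx using 3 with i hi
  · simp [eval_nodal, eval_nodal_at_node hi]
  · simp [eval_nodal]

end Lagrange

theorem stmt_17_general (p : ℕ) (lam mu : Fin p → ℂ)
    (hdist : Function.Injective (Sum.elim lam mu : Fin p ⊕ Fin p → ℂ))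
    (a : ℂ) (j : Fin p) :
    (1 / a) * ((∏ k, (lam j - mu k)) / ∏ k ∈ Finset.univ.erase j, (lam j - lam k)) *
        ∑ i, (∏ k, (mu i - lam k)) /
          ((lam j - mu i) * ∏ k ∈ Finset.univ.erase i, (mu i - mu k))
      = (1 / a) * (mu j - lam j) *
          ∏ k ∈ Finset.univ.erase j, ((lam j - mu k) / (lam j - lam k)) := by
  obtain ⟨-, hmu, hlam_ne_mu⟩ := Sum.elim_injective.1 hdist
  have hsum : ∑ i, (∏ k, (mu i - lam k)) /
      ((lam j - mu i) * ∏ k ∈ univ.erase i, (mu i - mu k)) = -1 := by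
    rw [Lagrange.sum_prod_sub_div_eq_prod_div_prod_sub_one hmu.injOn lam
      fun i _ => hlam_ne_mu j i, prod_eq_zero (mem_univ j) (sub_self _)]
    ring
  rw [hsum, prod_div_distrib, ← mul_prod_erase univ _ (mem_univ j)]
  ring

theorem stmt_17 (p : ℕ) (lam mu : Fin p → ℂ)
    (hdist : Function.Injective (Sum.elim lam mu : Fin p ⊕ Fin p → ℂ))
    (a : ℂ) (ha : a ≠ 0) (j : Fin p) :
    (1 / a) * ((∏ k, (lam j - mu k)) / ∏ k ∈ Finset.univ.erase j, (lam j - lam k)) *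
        ∑ i, (∏ k, (mu i - lam k)) /
          ((lam j - mu i) * ∏ k ∈ Finset.univ.erase i, (mu i - mu k))
      = (1 / a) * (mu j - lam j) *
          ∏ k ∈ Finset.univ.erase j, ((lam j - mu k) / (lam j - lam k)) :=
  stmt_17_general p lam mu hdist a j
end
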